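/- arXiv:2406.02796 — 2 statements merged into one kernel-verified Lean document; each statement's English description precedes it below -/
import Mathlib

section
/- For every z ∈ ℂ with |z| < 1, one has 1 + z ≠ 0 and |(1 + z)⁻¹ − e^{−z}| ≤ |z|²/(1 − |z|). -/
/-!
Expand both sides in powers of `w = -z`: `(1 - w)⁻¹ = ∑ wⁿ` and `e^w = ∑ wⁿ / n!`, so the
difference is `∑ wⁿ (1 - 1/n!)`. The terms with `n < 2` vanish and every other term has norm at
most `‖w‖ⁿ`, so the difference is bounded by the geometric tail `∑_{n ≥ 2} ‖w‖ⁿ = ‖w‖² / (1 - ‖w‖)`.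
-/

open Nat

theorem HasSum.norm_le_geometric_tail {E : Type*} [SeminormedAddCommGroup E] {f : ℕ → E} {a : E}
    {r : ℝ} (k : ℕ) (hf : HasSum f a) (hf_lt : ∀ n < k, f n = 0) (hr₀ : 0 ≤ r) (hr₁ : r < 1)
    (hfr : ∀ n, ‖f n‖ ≤ r ^ n) : ‖a‖ ≤ r ^ k / (1 - r) := by
  have htail : HasSum (fun n => f (n + k)) a := by
    simpa [Finset.sum_eq_zero fun i hi => hf_lt i (Finset.mem_range.1 hi)] using
      (hasSum_nat_add_iff' k).2 hf
  have hgeom : HasSum (fun n => r ^ (n + k)) (r ^ k / (1 - r)) := by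
    simpa [pow_add, mul_comm, div_eq_mul_inv] using
      (hasSum_geometric_of_lt_one hr₀ hr₁).mul_left (r ^ k)
  exact htail.norm_le_of_bounded hgeom fun n => hfr (n + k)

theorem Complex.hasSum_inv_one_sub_sub_exp {w : ℂ} (hw : ‖w‖ < 1) :
    HasSum (fun n : ℕ => w ^ n * (1 - (n ! : ℂ)⁻¹)) ((1 - w)⁻¹ - Complex.exp w) := by
  have hexp : HasSum (fun n : ℕ => w ^ n / n !) (Complex.exp w) :=
    Complex.exp_eq_exp_ℂ ▸ NormedSpace.expSeries_div_hasSum_exp w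
  refine ((hasSum_geometric_of_norm_lt_one hw).sub hexp).congr_fun fun n => ?_
  ring

theorem Complex.norm_one_sub_inv_factorial_le_one (n : ℕ) : ‖1 - (n ! : ℂ)⁻¹‖ ≤ 1 := by
  have hfac : (1 : ℝ) ≤ n ! := mod_cast n.factorial_pos
  have hinv : (n ! : ℝ)⁻¹ ≤ 1 := inv_le_one_of_one_le₀ hfac
  rw [show (1 : ℂ) - (n ! : ℂ)⁻¹ = ((1 - (n ! : ℝ)⁻¹ : ℝ) : ℂ) by push_cast; ring,
    Complex.norm_real, Real.norm_of_nonneg (sub_nonneg.2 hinv)]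
  exact sub_le_self _ (by positivity)

theorem Complex.norm_inv_one_sub_sub_exp_le {w : ℂ} (hw : ‖w‖ < 1) :
    ‖(1 - w)⁻¹ - Complex.exp w‖ ≤ ‖w‖ ^ 2 / (1 - ‖w‖) := by
  refine (hasSum_inv_one_sub_sub_exp hw).norm_le_geometric_tail 2 ?_ (norm_nonneg w) hw fun n => ?_
  · intro n hn
    interval_cases n <;> simp
  · calc ‖w ^ n * (1 - (n ! : ℂ)⁻¹)‖ ≤ ‖w‖ ^ n * 1 := by
          rw [norm_mul, norm_pow]
          gcongr
          exact norm_one_sub_inv_factorial_le_one n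
      _ = ‖w‖ ^ n := mul_one _

/-- For `|z| < 1`, `1 + z ≠ 0` and `|(1 + z)⁻¹ − e^{−z}| ≤ |z|² / (1 − |z|)`. -/
theorem inv_sub_exp_bound (z : ℂ) (hz : ‖z‖ < 1) :
    1 + z ≠ 0 ∧
    ‖(1 + z)⁻¹ - Complex.exp (-z)‖ ≤ ‖z‖ ^ 2 / (1 - ‖z‖) := by
  refine ⟨fun h => by simp [eq_neg_of_add_eq_zero_right h] at hz, ?_⟩
  simpa using Complex.norm_inv_one_sub_sub_exp_le (w := -z) (by simpa using hz)
end

section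
/- Let n ≥ 1 be an integer, λ ≥ 0, Δt ≥ 0, and let z ∈ ℂ satisfy |z| + λΔt < 1. Then 1 + z − λΔt ≠ 0 and |(1 + z − λΔt)^{−n} − e^{−nz + nλΔt}| ≤ 2n·(1 − |z| − λΔt)^{−(n+1)}·e^{n|z| + nλΔt}·(|z|² + λ²Δt²). -/
/-!
Put `w = z - λΔt`, so the quantity is `(1 + w)⁻¹ ^ n - exp (-w) ^ n`. Both bases have norm at most
`M = (1 - ρ)⁻¹ e^ρ` whenever `‖w‖ ≤ ρ < 1`, so telescoping `aⁿ - bⁿ` costs a factor `n M^(n-1)`,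
and `(1 + w)⁻¹ - exp (-w) = (1 + w)⁻¹ (exp w - 1 - w) exp (-w)` is `O(‖w‖²)`.
-/

theorem norm_pow_sub_pow_le {R : Type*} [SeminormedCommRing R] [NormOneClass R] {x y : R} {M : ℝ}
    (hx : ‖x‖ ≤ M) (hy : ‖y‖ ≤ M) (n : ℕ) :
    ‖x ^ n - y ^ n‖ ≤ n * M ^ (n - 1) * ‖x - y‖ := by
  have hM : 0 ≤ M := (norm_nonneg x).trans hx
  have hterm : ∀ i ∈ Finset.range n, ‖x ^ i * y ^ (n - 1 - i)‖ ≤ M ^ (n - 1) := fun i hi => by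
    have hi : i ≤ n - 1 := Nat.le_sub_one_of_lt (Finset.mem_range.mp hi)
    calc ‖x ^ i * y ^ (n - 1 - i)‖ ≤ ‖x‖ ^ i * ‖y‖ ^ (n - 1 - i) :=
          (norm_mul_le _ _).trans (mul_le_mul (norm_pow_le _ _) (norm_pow_le _ _)
            (norm_nonneg _) (by positivity))
      _ ≤ M ^ i * M ^ (n - 1 - i) := by gcongr
      _ = M ^ (n - 1) := by rw [← pow_add, Nat.add_sub_cancel' hi]
  rw [← geom_sum₂_mul]
  refine (norm_mul_le _ _).trans (mul_le_mul_of_nonneg_right ?_ (norm_nonneg _))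
  simpa using norm_sum_le_of_le _ hterm

namespace Complex

theorem one_sub_le_norm_one_add {w : ℂ} {ρ : ℝ} (hw : ‖w‖ ≤ ρ) : 1 - ρ ≤ ‖1 + w‖ := by
  have := norm_sub_norm_le (1 : ℂ) (-w)
  rw [norm_one, norm_neg, sub_neg_eq_add] at this
  linarith

theorem one_add_ne_zero_of_norm_le {w : ℂ} {ρ : ℝ} (hw : ‖w‖ ≤ ρ) (hρ : ρ < 1) : 1 + w ≠ 0 :=
  norm_pos_iff.mp ((sub_pos.mpr hρ).trans_le (one_sub_le_norm_one_add hw))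

theorem norm_inv_one_add_le {w : ℂ} {ρ : ℝ} (hw : ‖w‖ ≤ ρ) (hρ : ρ < 1) :
    ‖(1 + w)⁻¹‖ ≤ (1 - ρ)⁻¹ := by
  rw [norm_inv]
  exact inv_anti₀ (sub_pos.mpr hρ) (one_sub_le_norm_one_add hw)

theorem norm_exp_le_of_norm_le {w : ℂ} {ρ : ℝ} (hw : ‖w‖ ≤ ρ) : ‖exp w‖ ≤ Real.exp ρ :=
  (norm_exp_le_exp_norm w).trans (Real.exp_le_exp.mpr hw)

theorem norm_inv_one_add_sub_exp_neg_le {w : ℂ} {ρ : ℝ} (hw : ‖w‖ ≤ ρ) (hρ : ρ < 1) :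
    ‖(1 + w)⁻¹ - exp (-w)‖ ≤ (1 - ρ)⁻¹ * Real.exp ρ * ‖w‖ ^ 2 := by
  have h1w : 1 + w ≠ 0 := one_add_ne_zero_of_norm_le hw hρ
  have hinv : ‖(1 + w)⁻¹‖ ≤ (1 - ρ)⁻¹ := norm_inv_one_add_le hw hρ
  have hexp : ‖exp (-w)‖ ≤ Real.exp ρ := norm_exp_le_of_norm_le (by rwa [norm_neg])
  have hquad : ‖exp w - (1 + w)‖ ≤ ‖w‖ ^ 2 := by
    rw [← sub_sub]; exact norm_exp_sub_one_sub_id_le (hw.trans hρ.le)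
  rw [exp_neg, inv_sub_inv' h1w (exp_ne_zero w), ← exp_neg, norm_mul, norm_mul]
  calc ‖(1 + w)⁻¹‖ * ‖exp w - (1 + w)‖ * ‖exp (-w)‖
      ≤ (1 - ρ)⁻¹ * ‖w‖ ^ 2 * Real.exp ρ := by gcongr
    _ = (1 - ρ)⁻¹ * Real.exp ρ * ‖w‖ ^ 2 := by ring

theorem norm_one_add_zpow_neg_sub_exp_le {w : ℂ} {ρ : ℝ} (hw : ‖w‖ ≤ ρ) (hρ : ρ < 1) (n : ℕ) :
    ‖(1 + w) ^ (-(n : ℤ)) - exp (-n * w)‖ ≤ n * ((1 - ρ)⁻¹ * Real.exp ρ) ^ n * ‖w‖ ^ 2 := by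
  set M := (1 - ρ)⁻¹ * Real.exp ρ
  have hρ0 : 0 ≤ ρ := (norm_nonneg w).trans hw
  have hinv_one_le : 1 ≤ (1 - ρ)⁻¹ := (one_le_inv₀ (sub_pos.mpr hρ)).mpr (sub_le_self 1 hρ0)
  have hinv : ‖(1 + w)⁻¹‖ ≤ M :=
    (norm_inv_one_add_le hw hρ).trans (le_mul_of_one_le_right (by positivity) (Real.one_le_exp hρ0))
  have hexp : ‖exp (-w)‖ ≤ M :=
    (norm_exp_le_of_norm_le (by rwa [norm_neg])).trans
      (le_mul_of_one_le_left (Real.exp_nonneg ρ) hinv_one_le)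
  rw [zpow_neg, zpow_natCast, ← inv_pow, neg_mul, ← mul_neg, exp_nat_mul]
  calc ‖(1 + w)⁻¹ ^ n - exp (-w) ^ n‖
      ≤ n * M ^ (n - 1) * (M * ‖w‖ ^ 2) :=
        (norm_pow_sub_pow_le hinv hexp n).trans
          (by gcongr; exact norm_inv_one_add_sub_exp_neg_le hw hρ)
    _ = n * M ^ n * ‖w‖ ^ 2 := by
        cases n with
        | zero => simp
        | succ k => rw [Nat.add_sub_cancel, pow_succ]; ring

end Complex

theorem rational_approx_power_bound_general (n : ℕ) (lam Δt : ℝ)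
    (hlam : 0 ≤ lam) (hΔt : 0 ≤ Δt) (z : ℂ) (hz : ‖z‖ + lam * Δt < 1) :
    1 + z - (lam * Δt : ℝ) ≠ 0 ∧
    ‖(1 + z - (lam * Δt : ℝ)) ^ (-(n : ℤ)) -
        Complex.exp (-(n : ℂ) * z + (n : ℂ) * (lam * Δt : ℝ))‖ ≤
      2 * n * (1 - ‖z‖ - lam * Δt) ^ (-((n : ℤ) + 1)) *
        Real.exp (n * ‖z‖ + n * (lam * Δt)) *
        (‖z‖ ^ 2 + lam ^ 2 * Δt ^ 2) := by
  set s := lam * Δt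
  have hs : 0 ≤ s := mul_nonneg hlam hΔt
  have hw : ‖z - s‖ ≤ ‖z‖ + s := by
    simpa [abs_of_nonneg hs] using norm_sub_le z (s : ℂ)
  rw [add_sub_assoc, show -(n : ℂ) * z + n * s = -n * (z - s) by ring]
  refine ⟨Complex.one_add_ne_zero_of_norm_le hw hz,
    (Complex.norm_one_add_zpow_neg_sub_exp_le hw hz n).trans ?_⟩
  have hr : 0 < 1 - ‖z‖ - s := by linarith
  have hsq : ‖z - s‖ ^ 2 ≤ 2 * (‖z‖ ^ 2 + lam ^ 2 * Δt ^ 2) := by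
    calc ‖z - s‖ ^ 2 ≤ (‖z‖ + s) ^ 2 := by gcongr
      _ ≤ 2 * (‖z‖ ^ 2 + s ^ 2) := add_sq_le
      _ = 2 * (‖z‖ ^ 2 + lam ^ 2 * Δt ^ 2) := by ring
  have hpow : (1 - (‖z‖ + s))⁻¹ ^ n ≤ (1 - ‖z‖ - s) ^ (-((n : ℤ) + 1)) := by
    rw [← sub_sub, ← Int.natCast_succ, zpow_neg, zpow_natCast, ← inv_pow]
    exact pow_le_pow_right₀ ((one_le_inv₀ hr).mpr (by linarith [norm_nonneg z])) n.le_succ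
  rw [mul_pow, ← Real.exp_nat_mul, mul_add]
  calc (n : ℝ) * ((1 - (‖z‖ + s))⁻¹ ^ n * Real.exp (n * ‖z‖ + n * s)) * ‖z - s‖ ^ 2
      ≤ n * ((1 - ‖z‖ - s) ^ (-((n : ℤ) + 1)) * Real.exp (n * ‖z‖ + n * s)) *
          (2 * (‖z‖ ^ 2 + lam ^ 2 * Δt ^ 2)) := by gcongr
    _ = _ := by ring

/-- For an integer `n ≥ 1`, `λ ≥ 0`, `Δt ≥ 0` and `z ∈ ℂ` with `|z| + λΔt < 1`, we have
`1 + z − λΔt ≠ 0` and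
`|(1 + z − λΔt)^{−n} − e^{−nz + nλΔt}| ≤ 2n (1 − |z| − λΔt)^{−(n+1)} e^{n|z| + nλΔt} (|z|² + λ²Δt²)`. -/
theorem rational_approx_power_bound (n : ℕ) (hn : 1 ≤ n) (lam Δt : ℝ)
    (hlam : 0 ≤ lam) (hΔt : 0 ≤ Δt) (z : ℂ) (hz : ‖z‖ + lam * Δt < 1) :
    1 + z - (lam * Δt : ℝ) ≠ 0 ∧
    ‖(1 + z - (lam * Δt : ℝ)) ^ (-(n : ℤ)) -
        Complex.exp (-(n : ℂ) * z + (n : ℂ) * (lam * Δt : ℝ))‖ ≤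
      2 * n * (1 - ‖z‖ - lam * Δt) ^ (-((n : ℤ) + 1)) *
        Real.exp (n * ‖z‖ + n * (lam * Δt)) *
        (‖z‖ ^ 2 + lam ^ 2 * Δt ^ 2) :=
  rational_approx_power_bound_general n lam Δt hlam hΔt z hz
end
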